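/- Let D_n(q) be the Bressoud polynomials, defined by D_0(q)=1, D_1(q)=1+q, and D_n(q) = (1+q−q^n+q^{2n−1})D_{n−1}(q) − q(1−q^{n−1})D_{n−2}(q). Then for every n ≥ 0, D_n(q) = Σ_{k=0}^{n} q^{k²} C(n,k)_q, where C(n,k)_q is the q-binomial coefficient. -/

import Mathlib

/-!
Write `S_j(n) = Σ_k q^(k² + jk) C(n,k)_q`, so that the right-hand side is `S_0(n)`. The two Pascal
rules for `C(n+1,k)_q` give the recurrences `S_j(n+1) = S_j(n) + q^(n+j+1) S_{j+1}(n)` and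
`S_j(n+1) = S_{j+1}(n) + q^(j+1) S_{j+2}(n)`. Eliminating `S_1` and `S_2` between four instances
of them shows that `S_0` satisfies the three-term recurrence defining `D_n`.
-/

open Polynomial

/-- The `q`-binomial (Gaussian binomial) coefficient `C(n,k)_q` as a polynomial
in `ℤ[q]`, via the Pascal-type recurrence `C(n+1,k+1)_q = q^(k+1) C(n,k+1)_q + C(n,k)_q`. -/
noncomputable def qBinom : ℕ → ℕ → Polynomial ℤ
  | _, 0 => 1
  | 0, _ + 1 => 0
  | n + 1, k + 1 => qBinom n (k + 1) * X ^ (k + 1) + qBinom n k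

/-- The Bressoud polynomials `D_n(q)`. -/
noncomputable def bressoudD : ℕ → Polynomial ℤ
  | 0 => 1
  | 1 => 1 + X
  | n + 2 => (1 + X - X ^ (n + 2) + X ^ (2 * (n + 2) - 1)) * bressoudD (n + 1)
      - X * (1 - X ^ (n + 1)) * bressoudD n

lemma qBinom_zero_right (n : ℕ) : qBinom n 0 = 1 := by
  cases n <;> rfl

lemma qBinom_succ_succ (n k : ℕ) :
    qBinom (n + 1) (k + 1) = qBinom n (k + 1) * X ^ (k + 1) + qBinom n k :=
  rfl

lemma qBinom_eq_zero_of_lt {n k : ℕ} (h : n < k) : qBinom n k = 0 := by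
  induction n generalizing k with
  | zero =>
    obtain ⟨k, rfl⟩ := Nat.exists_eq_succ_of_ne_zero h.ne'
    rfl
  | succ n ih =>
    obtain ⟨k, rfl⟩ := Nat.exists_eq_succ_of_ne_zero (by omega : k ≠ 0)
    rw [qBinom_succ_succ, ih (by omega), ih (by omega), zero_mul, add_zero]

lemma qBinom_succ_succ' (n k : ℕ) :
    qBinom (n + 1) (k + 1) = qBinom n (k + 1) + X ^ (n - k) * qBinom n k := by
  induction n generalizing k with
  | zero => cases k <;> simp [qBinom_succ_succ, qBinom_zero_right, qBinom_eq_zero_of_lt]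
  | succ n ih =>
    cases k with
    | zero =>
      have h₁ := qBinom_succ_succ (n + 1) 0
      have h₂ := qBinom_succ_succ n 0
      have h₃ := ih 0
      simp only [qBinom_zero_right, Nat.sub_zero] at h₁ h₂ h₃ ⊢
      linear_combination h₁ + X * h₃ - h₂
    | succ k =>
      have hpow : qBinom n (k + 1) * X ^ (n - (k + 1)) * X ^ (k + 2) =
          X ^ (n - k) * (qBinom n (k + 1) * X ^ (k + 1)) := by
        rcases lt_or_ge k n with hk | hk
        · rw [mul_assoc, ← pow_add, mul_left_comm, ← pow_add]
          congr 2; omega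
        · rw [qBinom_eq_zero_of_lt (by omega), zero_mul, zero_mul, zero_mul, mul_zero]
      rw [Nat.add_sub_add_right]
      linear_combination qBinom_succ_succ (n + 1) (k + 1) + X ^ (k + 2) * ih (k + 1) + ih k -
        qBinom_succ_succ n (k + 1) - X ^ (n - k) * qBinom_succ_succ n k + hpow

noncomputable def bressoudSum (j n : ℕ) : ℤ[X] :=
  ∑ k ∈ Finset.range (n + 1), X ^ (k ^ 2 + j * k) * qBinom n k

lemma bressoudSum_eq_sum_add_one (j n : ℕ) :
    bressoudSum j n =
      ∑ k ∈ Finset.range n, X ^ ((k + 1) ^ 2 + j * (k + 1)) * qBinom n (k + 1) + 1 := by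
  simp [bressoudSum, Finset.sum_range_succ', qBinom_zero_right]

lemma bressoudSum_eq_sum_range_succ_add_one (j n : ℕ) :
    bressoudSum j n =
      ∑ k ∈ Finset.range (n + 1), X ^ ((k + 1) ^ 2 + j * (k + 1)) * qBinom n (k + 1) + 1 := by
  rw [bressoudSum_eq_sum_add_one, Finset.sum_range_succ, qBinom_eq_zero_of_lt n.lt_succ_self,
    mul_zero, add_zero]

lemma bressoudSum_succ (j n : ℕ) :
    bressoudSum j (n + 1) = bressoudSum j n + X ^ (n + j + 1) * bressoudSum (j + 1) n := by
  have hterm : ∀ k ∈ Finset.range (n + 1),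
      X ^ ((k + 1) ^ 2 + j * (k + 1)) * qBinom (n + 1) (k + 1) =
        X ^ ((k + 1) ^ 2 + j * (k + 1)) * qBinom n (k + 1) +
          X ^ (n + j + 1) * (X ^ (k ^ 2 + (j + 1) * k) * qBinom n k) := by
    intro k hk
    obtain ⟨m, rfl⟩ := Nat.exists_eq_add_of_le (Nat.lt_succ_iff.mp (Finset.mem_range.mp hk))
    rw [qBinom_succ_succ', Nat.add_sub_cancel_left]
    ring
  rw [bressoudSum_eq_sum_add_one j (n + 1), Finset.sum_congr rfl hterm, Finset.sum_add_distrib,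
    ← Finset.mul_sum, bressoudSum_eq_sum_range_succ_add_one j n, bressoudSum]
  ring

lemma bressoudSum_succ' (j n : ℕ) :
    bressoudSum j (n + 1) = bressoudSum (j + 1) n + X ^ (j + 1) * bressoudSum (j + 2) n := by
  have hterm : ∀ k ∈ Finset.range (n + 1),
      X ^ ((k + 1) ^ 2 + j * (k + 1)) * qBinom (n + 1) (k + 1) =
        X ^ ((k + 1) ^ 2 + (j + 1) * (k + 1)) * qBinom n (k + 1) +
          X ^ (j + 1) * (X ^ (k ^ 2 + (j + 2) * k) * qBinom n k) := by
    intro k _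
    rw [qBinom_succ_succ]
    ring
  rw [bressoudSum_eq_sum_add_one j (n + 1), Finset.sum_congr rfl hterm, Finset.sum_add_distrib,
    ← Finset.mul_sum, bressoudSum_eq_sum_range_succ_add_one (j + 1) n, bressoudSum]
  ring

lemma bressoudD_eq_bressoudSum_zero (n : ℕ) : bressoudD n = bressoudSum 0 n := by
  induction n using Nat.twoStepInduction with
  | zero => simp [bressoudD, bressoudSum, qBinom_zero_right]
  | one => simp [bressoudD, bressoudSum, Finset.sum_range_succ, qBinom_zero_right, qBinom_succ_succ,
    qBinom_eq_zero_of_lt]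
  | more n ih ih' =>
    have h₁ := bressoudSum_succ 0 (n + 1)
    have h₂ := bressoudSum_succ 1 n
    have h₃ := bressoudSum_succ 0 n
    have h₄ := bressoudSum_succ' 0 n
    rw [bressoudD, ih, ih', show 2 * (n + 2) - 1 = 2 * n + 3 by omega]
    linear_combination -h₁ - X ^ (n + 2) * h₂ - (X ^ (n + 2) - X) * h₃ + X ^ (2 * n + 3) * h₄

/-- Bressoud's identity: `D_n(q) = Σ_{k=0}^n q^{k²} C(n,k)_q` in `ℤ[q]`. -/
theorem statement7 (n : ℕ) :
    bressoudD n = ∑ k ∈ Finset.range (n + 1), X ^ (k ^ 2) * qBinom n k := by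
  simp [bressoudD_eq_bressoudSum_zero, bressoudSum]
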